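/- Let Ω ⊂ ℝⁿ be a compact convex set with nonempty interior, let g : ∂Ω → ℝ be continuous, let u be the convex envelope of the boundary data g, let x₀ be a point in the interior of Ω, let P be a supporting plane of u at x₀, and let C^{x₀} = {y ∈ Ω : u(y) = P(y)} be the contact set. Then C^{x₀} equals the convex hull of C^{x₀} ∩ ∂Ω. -/

import Mathlib

open Set Pointwise

theorem aux_sum_embed {ι κ M : Type*} [Fintype ι] [Fintype κ] [DecidableEq κ] [AddCommMonoid M]
    (φ : ι ↪ κ) (f : κ → M) (h0 : ∀ j, (¬ ∃ i, φ i = j) → f j = 0) :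
    ∑ j, f j = ∑ i, f (φ i) := by
  have h1 : ∑ j ∈ Finset.univ.image φ, f j = ∑ i, f (φ i) :=
    Finset.sum_image (fun i _ j _ h => φ.injective h)
  rw [← h1]
  refine (Finset.sum_subset (Finset.subset_univ _) ?_).symm
  intro j _ hj
  refine h0 j fun ⟨i, hi⟩ => hj (Finset.mem_image.mpr ⟨i, Finset.mem_univ i, hi⟩)

theorem aux_isCompact_convexHull {F : Type*} [NormedAddCommGroup F] [NormedSpace ℝ F]
    [FiniteDimensional ℝ F] {s : Set F} (hs : IsCompact s) : IsCompact (convexHull ℝ s) := by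
  classical
  rcases s.eq_empty_or_nonempty with rfl | ⟨p₀, hp₀⟩
  · simpa [convexHull_empty] using isCompact_empty
  set m := Module.finrank ℝ F + 1 with hm
  have hT : IsCompact ((stdSimplex ℝ (Fin m)) ×ˢ Set.univ.pi fun _ : Fin m => s) :=
    (isCompact_stdSimplex _ _).prod (isCompact_univ_pi fun _ => hs)
  have hcont : Continuous fun p : (Fin m → ℝ) × (Fin m → F) => ∑ i, p.1 i • p.2 i := by
    apply continuous_finset_sum
    intro i _
    exact ((continuous_apply i).comp continuous_fst).smul
      ((continuous_apply i).comp continuous_snd)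
  have himage : (fun p : (Fin m → ℝ) × (Fin m → F) => ∑ i, p.1 i • p.2 i) ''
      ((stdSimplex ℝ (Fin m)) ×ˢ Set.univ.pi fun _ : Fin m => s) = convexHull ℝ s := by
    apply Subset.antisymm
    · rintro x ⟨⟨w, z⟩, ⟨hw, hz⟩, rfl⟩
      have h1 : ∑ i, w i = 1 := hw.2
      have := Finset.centerMass_mem_convexHull (R := ℝ) Finset.univ
        (w := w) (z := z) (fun i _ => hw.1 i) (by rw [h1]; norm_num)
        (fun i _ => hz i (mem_univ i))
      rwa [Finset.centerMass_eq_of_sum_1 _ _ h1] at this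
    · intro x hx
      obtain ⟨ι, hfin, z, w, hzs, hai, hwpos, hwsum, hwz⟩ :=
        eq_pos_convex_span_of_mem_convexHull hx
      haveI : Nonempty ι := by
        by_contra h
        rw [not_nonempty_iff] at h
        rw [Finset.sum_eq_zero (fun i _ => (h.false i).elim)] at hwsum
        norm_num at hwsum
      have hcard : Fintype.card ι ≤ m := by
        rw [hm, ← hai.finrank_vectorSpan_add_one]
        exact Nat.add_le_add_right (Submodule.finrank_le _) 1
      obtain ⟨φ⟩ : Nonempty (ι ↪ Fin m) :=
        Function.Embedding.nonempty_of_card_le (by simpa using hcard)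
      set w' : Fin m → ℝ := fun j => if h : ∃ i, φ i = j then w h.choose else 0 with hw'
      set z' : Fin m → F := fun j => if h : ∃ i, φ i = j then z h.choose else p₀ with hz'
      have hkey : ∀ i : ι, w' (φ i) = w i ∧ z' (φ i) = z i := by
        intro i
        have h : ∃ i', φ i' = φ i := ⟨i, rfl⟩
        have hch : h.choose = i := φ.injective h.choose_spec
        constructor
        · simp only [hw', dif_pos h, hch]
        · simp only [hz', dif_pos h, hch]
      have hw0 : ∀ j, (¬ ∃ i, φ i = j) → w' j = 0 := by
        intro j h; simp only [hw', dif_neg h]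
      refine ⟨⟨w', z'⟩, ⟨⟨fun j => ?_, ?_⟩, fun j _ => ?_⟩, ?_⟩
      · by_cases h : ∃ i, φ i = j
        · simp only [hw', dif_pos h]; exact (hwpos _).le
        · simp only [hw', dif_neg h]; exact le_refl 0
      · rw [aux_sum_embed φ w' hw0]
        rw [Finset.sum_congr rfl fun i _ => (hkey i).1]
        exact hwsum
      · by_cases h : ∃ i, φ i = j
        · simp only [hz', dif_pos h]; exact hzs ⟨_, rfl⟩
        · simp only [hz', dif_neg h]; exact hp₀
      · show ∑ j, w' j • z' j = x
        rw [aux_sum_embed φ (fun j => w' j • z' j)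
          (fun j h => by show w' j • z' j = 0; rw [hw0 j h, zero_smul])]
        rw [Finset.sum_congr rfl fun i _ => by rw [(hkey i).1, (hkey i).2]]
        exact hwz
  rw [← himage]
  exact hT.image hcont


theorem aux_subset_convexHull_frontier {F : Type*} [NormedAddCommGroup F] [NormedSpace ℝ F]
    [FiniteDimensional ℝ F] [Nontrivial F] {Ω : Set F} (hc : IsCompact Ω)
    (hconv : Convex ℝ Ω)
    (hcompactHull : ∀ s : Set F, IsCompact s → IsCompact (convexHull ℝ s)) :
    Ω ⊆ convexHull ℝ (frontier Ω) := by
  have hclosed : IsClosed Ω := hc.isClosed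
  have hfrsub : frontier Ω ⊆ Ω := by
    rw [frontier, hclosed.closure_eq]; exact diff_subset
  have hext : Ω.extremePoints ℝ ⊆ frontier Ω := by
    rintro x hx
    have hxΩ : x ∈ Ω := hx.1
    rw [frontier, hclosed.closure_eq]
    refine ⟨hxΩ, fun hint => ?_⟩
    rw [mem_interior_iff_mem_nhds, Metric.mem_nhds_iff] at hint
    obtain ⟨ε, hε, hball⟩ := hint
    obtain ⟨v, hv⟩ := exists_ne (0 : F)
    set d : F := (ε / (2 * ‖v‖)) • v with hd
    have hvnorm : 0 < ‖v‖ := norm_pos_iff.mpr hv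
    have hdnorm : ‖d‖ = ε / 2 := by
      rw [hd, norm_smul, Real.norm_eq_abs, abs_of_pos (by positivity)]
      field_simp
    have hdne : d ≠ 0 := by
      intro h; rw [h, norm_zero] at hdnorm; linarith
    have h1 : x + d ∈ Ω := by
      apply hball; rw [Metric.mem_ball, dist_eq_norm]; simp [hdnorm]; linarith
    have h2 : x - d ∈ Ω := by
      apply hball; rw [Metric.mem_ball, dist_eq_norm]
      simp only [sub_sub_cancel_left, norm_neg, hdnorm]; linarith
    have hmem : x ∈ openSegment ℝ (x - d) (x + d) := by
      refine ⟨1/2, 1/2, by norm_num, by norm_num, by norm_num, ?_⟩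
      module
    obtain ⟨he, -⟩ := (mem_extremePoints.mp hx).2 _ h2 _ h1 hmem
    apply hdne
    have : x - d = x := he
    have h0 : d = x - (x - d) := by abel
    rw [h0, this, sub_self]
  have hfr_cpt : IsCompact (frontier Ω) := hc.of_isClosed_subset isClosed_frontier hfrsub
  have hhull_closed : IsClosed (convexHull ℝ (frontier Ω)) :=
    (hcompactHull _ hfr_cpt).isClosed
  calc Ω = closure (convexHull ℝ (Ω.extremePoints ℝ)) :=
        (closure_convexHull_extremePoints hc hconv).symm
    _ ⊆ closure (convexHull ℝ (frontier Ω)) := closure_mono (convexHull_mono hext)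
    _ = convexHull ℝ (frontier Ω) := hhull_closed.closure_eq

-- AUX1 and AUX2 will be inserted here by concatenation

theorem contact_set_eq_convexHull_boundary_contact (n : ℕ) (hn : 1 ≤ n)
    (Ω : Set (EuclideanSpace ℝ (Fin n)))
    (hΩc : IsCompact Ω) (hΩconv : Convex ℝ Ω) (hΩint : (interior Ω).Nonempty)
    (g : EuclideanSpace ℝ (Fin n) → ℝ) (hg : ContinuousOn g (frontier Ω))
    (u : EuclideanSpace ℝ (Fin n) → ℝ)
    (hu : ∀ x ∈ Ω, u x = sSup {r : ℝ | ∃ (A : EuclideanSpace ℝ (Fin n)) (b : ℝ),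
      (∀ y ∈ frontier Ω, (inner ℝ A y : ℝ) + b ≤ g y) ∧ r = (inner ℝ A x : ℝ) + b})
    (x₀ : EuclideanSpace ℝ (Fin n)) (hx₀ : x₀ ∈ interior Ω)
    (P : EuclideanSpace ℝ (Fin n) → ℝ)
    (hPaff : ∃ (A : EuclideanSpace ℝ (Fin n)) (b : ℝ),
      ∀ x, P x = (inner ℝ A x : ℝ) + b)
    (hPle : ∀ y ∈ Ω, P y ≤ u y) (hPeq : P x₀ = u x₀) :
    {y | y ∈ Ω ∧ u y = P y} =
      convexHull ℝ ({y | y ∈ Ω ∧ u y = P y} ∩ frontier Ω) := by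
  classical
  haveI : Nontrivial (EuclideanSpace ℝ (Fin n)) :=
    ⟨⟨EuclideanSpace.single ⟨0, hn⟩ (1 : ℝ), 0,
      fun h => (one_ne_zero : (1:ℝ) ≠ 0) (by simpa using congrArg (fun v => v ⟨0, hn⟩) h)⟩⟩
  obtain ⟨Ap, bp, hP⟩ := hPaff
  have hΩclosed : IsClosed Ω := hΩc.isClosed
  have hΩne : Ω.Nonempty := hΩint.mono interior_subset
  have hfrsubΩ : frontier Ω ⊆ Ω := by
    rw [frontier, hΩclosed.closure_eq]; exact diff_subset
  have hfr_cpt : IsCompact (frontier Ω) := hΩc.of_isClosed_subset isClosed_frontier hfrsubΩ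
  have hfr_ne : (frontier Ω).Nonempty := by
    by_contra h
    rw [not_nonempty_iff_eq_empty] at h
    have hsubint : Ω ⊆ interior Ω := by
      intro x hx
      have hnf : x ∉ frontier Ω := by rw [h]; exact notMem_empty x
      rw [frontier, hΩclosed.closure_eq] at hnf
      by_contra hni
      exact hnf ⟨hx, hni⟩
    have hop : IsOpen Ω := by
      rw [← subset_antisymm interior_subset hsubint]; exact isOpen_interior
    haveI : PreconnectedSpace (EuclideanSpace ℝ (Fin n)) := ⟨((convex_univ : Convex ℝ (Set.univ : Set (EuclideanSpace ℝ (Fin n))))).isPreconnected⟩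
    have huniv : Ω = univ := (isClopen_iff.mp ⟨hΩclosed, hop⟩).resolve_left hΩne.ne_empty
    exact NormedSpace.unbounded_univ ℝ (EuclideanSpace ℝ (Fin n)) (huniv ▸ hΩc.isBounded)
  obtain ⟨ymin, hymin, hmin⟩ := hfr_cpt.exists_isMinOn hfr_ne hg
  obtain ⟨ymax, hymax, hmax⟩ := hfr_cpt.exists_isMaxOn hfr_ne hg
  set S : (EuclideanSpace ℝ (Fin n)) → Set ℝ := fun x => {r : ℝ | ∃ (A : (EuclideanSpace ℝ (Fin n))) (b : ℝ),
      (∀ y ∈ frontier Ω, (inner ℝ A y : ℝ) + b ≤ g y) ∧ r = (inner ℝ A x : ℝ) + b} with hS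
  have hu' : ∀ x ∈ Ω, u x = sSup (S x) := hu
  have hSne : ∀ x : (EuclideanSpace ℝ (Fin n)), (S x).Nonempty := by
    intro x
    refine ⟨(inner ℝ (0 : (EuclideanSpace ℝ (Fin n))) x : ℝ) + g ymin, 0, g ymin, fun y hy => ?_, rfl⟩
    rw [inner_zero_left, zero_add]
    exact isMinOn_iff.mp hmin y hy
  have hΩhull : Ω ⊆ convexHull ℝ (frontier Ω) :=
    aux_subset_convexHull_frontier hΩc hΩconv (fun s hs => aux_isCompact_convexHull hs)
  have hMg : ∀ (A : (EuclideanSpace ℝ (Fin n))) (b : ℝ), (∀ y ∈ frontier Ω, (inner ℝ A y : ℝ) + b ≤ g y) →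
      ∀ x ∈ convexHull ℝ (frontier Ω), (inner ℝ A x : ℝ) + b ≤ g ymax := by
    intro A b hAb x hx
    have hlin : IsLinearMap ℝ (fun x : (EuclideanSpace ℝ (Fin n)) => (inner ℝ A x : ℝ)) :=
      ⟨fun v w => inner_add_right A v w, fun c v => real_inner_smul_right A v c⟩
    have hset : {x : (EuclideanSpace ℝ (Fin n)) | (inner ℝ A x : ℝ) + b ≤ g ymax}
        = {x : (EuclideanSpace ℝ (Fin n)) | (inner ℝ A x : ℝ) ≤ g ymax - b} := by
      ext w; simp only [mem_setOf_eq]; constructor <;> intro hw <;> linarith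
    have hconvset : Convex ℝ {x : (EuclideanSpace ℝ (Fin n)) | (inner ℝ A x : ℝ) + b ≤ g ymax} := by
      rw [hset]; exact convex_halfSpace_le hlin _
    refine convexHull_min (fun z hz => ?_) hconvset hx
    exact le_trans (hAb z hz) (isMaxOn_iff.mp hmax z hz)
  have hbdd : ∀ x ∈ Ω, BddAbove (S x) := by
    intro x hx
    refine ⟨g ymax, ?_⟩
    rintro r ⟨A, b, hAb, rfl⟩
    exact hMg A b hAb x (hΩhull hx)
  have hu_le_g : ∀ z ∈ frontier Ω, u z ≤ g z := by
    intro z hz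
    rw [hu' z (hfrsubΩ hz)]
    refine csSup_le (hSne z) ?_
    rintro r ⟨A, b, hAb, rfl⟩
    exact hAb z hz
  apply Subset.antisymm
  · -- contact set ⊆ hull
    intro y hy
    obtain ⟨hyΩ, hyuP⟩ := hy
    set G : Set ((EuclideanSpace ℝ (Fin n)) × ℝ) := (fun z => (z, g z)) '' frontier Ω with hG
    have hGcpt : IsCompact G := hfr_cpt.image_of_continuousOn (continuousOn_id.prodMk hg)
    have hGne : G.Nonempty := hfr_ne.image _
    set K := convexHull ℝ G with hK
    have hKcpt : IsCompact K := aux_isCompact_convexHull hGcpt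
    set R : Set ((EuclideanSpace ℝ (Fin n)) × ℝ) := ({(0 : (EuclideanSpace ℝ (Fin n)))} : Set (EuclideanSpace ℝ (Fin n))) ×ˢ (Ici (0 : ℝ)) with hR
    set A' := K + R with hA'
    have hA'closed : IsClosed A' :=
      IsClosed.add_left_of_isCompact (isClosed_singleton.prod isClosed_Ici) hKcpt
    have hA'conv : Convex ℝ A' :=
      (convex_convexHull ℝ G).add ((convex_singleton _).prod (convex_Ici _))
    have hGA' : G ⊆ A' := by
      intro a ha
      have h0 : a = a + ((0 : (EuclideanSpace ℝ (Fin n))), (0 : ℝ)) := by simp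
      rw [h0]
      exact add_mem_add (subset_convexHull ℝ G ha) (Set.mem_prod.mpr ⟨rfl, Set.mem_Ici.mpr le_rfl⟩)
    have hmem : (y, P y) ∈ A' := by
      by_contra hnot
      obtain ⟨F, α, hFy, hFA⟩ := geometric_hahn_banach_point_closed hA'conv hA'closed hnot
      set f : (EuclideanSpace ℝ (Fin n)) → ℝ := fun x => F (x, 0) with hf
      set s : ℝ := F ((0 : (EuclideanSpace ℝ (Fin n))), (1 : ℝ)) with hs
      have hdecomp : ∀ (x : (EuclideanSpace ℝ (Fin n))) (t : ℝ), F (x, t) = f x + t * s := by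
        intro x t
        have hxt : (x, t) = (x, (0 : ℝ)) + t • ((0 : (EuclideanSpace ℝ (Fin n))), (1 : ℝ)) := by
          simp [Prod.ext_iff]
        rw [hxt, map_add, map_smul, smul_eq_mul]
      obtain ⟨g₀, hg₀⟩ := hGne
      have hg₀K : g₀ ∈ K := subset_convexHull ℝ G hg₀
      have hg₀gt : α < F g₀ := hFA _ (hGA' hg₀)
      have hs0 : 0 ≤ s := by
        by_contra hsneg
        push_neg at hsneg
        have hf0 : F ((0 : (EuclideanSpace ℝ (Fin n))), (0 : ℝ)) = 0 := by
          rw [show ((0 : (EuclideanSpace ℝ (Fin n))), (0 : ℝ)) = (0 : (EuclideanSpace ℝ (Fin n)) × ℝ) from rfl, map_zero]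
        have hkey : ∀ t : ℝ, 0 ≤ t → α < F g₀ + t * s := by
          intro t ht
          have hmem' : g₀ + ((0 : (EuclideanSpace ℝ (Fin n))), t) ∈ A' :=
            add_mem_add hg₀K (Set.mem_prod.mpr ⟨rfl, ht⟩)
          have h := hFA _ hmem'
          rw [map_add, hdecomp 0 t] at h
          have : f 0 = 0 := hf0
          rw [this, zero_add] at h
          linarith
        set t0 := (F g₀ - α) / (-s) with ht0
        have ht0nn : 0 ≤ t0 := div_nonneg (by linarith) (by linarith)
        have hcontr := hkey t0 ht0nn
        have hsne : s ≠ 0 := ne_of_lt hsneg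
        have hts : t0 * s = -(F g₀ - α) := by
          rw [ht0]
          field_simp
        linarith
      rcases eq_or_lt_of_le hs0 with hs0' | hspos
      · have hfr_lt : ∀ z ∈ frontier Ω, α < f z := by
          intro z hz
          have h := hFA _ (hGA' ⟨z, hz, rfl⟩)
          rw [hdecomp, ← hs0', mul_zero, add_zero] at h
          exact h
        have hlin : IsLinearMap ℝ f := by
          constructor
          · intro a b
            show F (a + b, 0) = F (a, 0) + F (b, 0)
            rw [← map_add]
            congr 1
            simp [Prod.ext_iff]
          · intro c a
            show F (c • a, 0) = c * F (a, 0)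
            rw [← smul_eq_mul, ← map_smul]
            congr 1
            simp [Prod.ext_iff]
        have hhalf : Convex ℝ {x : (EuclideanSpace ℝ (Fin n)) | α ≤ f x} := convex_halfSpace_ge hlin α
        have hy_in : α ≤ f y :=
          convexHull_min (fun z hz => (hfr_lt z hz).le) hhalf (hΩhull hyΩ)
        have hFyP : F (y, P y) = f y + P y * s := hdecomp y (P y)
        rw [← hs0', mul_zero, add_zero] at hFyP
        linarith [hFy, hFyP ▸ hFy]
      · set Av := (InnerProductSpace.toDual ℝ (EuclideanSpace ℝ (Fin n))).symm
          ((-(s⁻¹)) • (F.comp (ContinuousLinearMap.inl ℝ (EuclideanSpace ℝ (Fin n)) ℝ))) with hAvdef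
        have hAv : ∀ x : (EuclideanSpace ℝ (Fin n)), (inner ℝ Av x : ℝ) = -(f x) / s := by
          intro x
          rw [hAvdef, InnerProductSpace.toDual_symm_apply]
          show ((-(s⁻¹)) • (F.comp (ContinuousLinearMap.inl ℝ (EuclideanSpace ℝ (Fin n)) ℝ))) x = -(f x) / s
          rw [ContinuousLinearMap.smul_apply, ContinuousLinearMap.comp_apply,
            ContinuousLinearMap.inl_apply, smul_eq_mul]
          show -(s⁻¹) * F (x, 0) = -(F (x, 0)) / s
          field_simp
        have hineq : ∀ z ∈ frontier Ω, (inner ℝ Av z : ℝ) + α / s ≤ g z := by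
          intro z hz
          have h := hFA _ (hGA' ⟨z, hz, rfl⟩)
          rw [hdecomp] at h
          rw [hAv]
          have hdiv : (α - f z) / s ≤ g z := (div_le_iff₀ hspos).mpr (by linarith)
          calc -(f z) / s + α / s = (α - f z) / s := by ring
            _ ≤ g z := hdiv
        have hle : (inner ℝ Av y : ℝ) + α / s ≤ u y := by
          rw [hu' y hyΩ]
          exact le_csSup (hbdd y hyΩ) ⟨Av, α / s, hineq, rfl⟩
        rw [hyuP] at hle
        have hF' : f y + P y * s < α := by rw [← hdecomp]; exact hFy
        have hlt : P y < (inner ℝ Av y : ℝ) + α / s := by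
          rw [hAv, show -(f y) / s + α / s = (α - f y) / s from by ring]
          exact (lt_div_iff₀ hspos).mpr (by linarith)
        linarith
    obtain ⟨a, ha, r, hr, hsum⟩ := Set.mem_add.mp hmem
    obtain ⟨hr1, hr2⟩ := Set.mem_prod.mp hr
    have hr1' : r.1 = 0 := hr1
    have hr2' : (0 : ℝ) ≤ r.2 := hr2
    have ha1 : a.1 = y := by
      have := congrArg Prod.fst hsum
      simpa [hr1'] using this
    have ha2 : a.2 ≤ P y := by
      have := congrArg Prod.snd hsum
      simp only [Prod.snd_add] at this
      linarith
    rw [hK, convexHull_eq] at ha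
    obtain ⟨ι, t, w, zf, hw0, hw1, hzmem, hcm⟩ := ha
    rw [Finset.centerMass_eq_of_sum_1 _ _ hw1] at hcm
    set z : ι → (EuclideanSpace ℝ (Fin n)) := fun i => (zf i).1 with hz
    have hzf : ∀ i ∈ t, zf i = (z i, g (z i)) ∧ z i ∈ frontier Ω := by
      intro i hi
      obtain ⟨zi, hzi, hzieq⟩ := hzmem i hi
      have heq : zf i = (zi, g zi) := by rw [← hzieq]
      have h1 : z i = zi := by rw [show z i = (zf i).1 from rfl, heq]
      constructor
      · rw [h1]; exact heq
      · rw [h1]; exact hzi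
    have h1 : ∑ i ∈ t, w i • z i = y := by
      have hfst := congrArg Prod.fst hcm
      rw [Prod.fst_sum] at hfst
      rw [← ha1, ← hfst]
      exact Finset.sum_congr rfl fun i hi => rfl
    have h2 : ∑ i ∈ t, w i * g (z i) = a.2 := by
      have hsnd := congrArg Prod.snd hcm
      rw [Prod.snd_sum] at hsnd
      rw [← hsnd]
      refine Finset.sum_congr rfl fun i hi => ?_
      rw [(hzf i hi).1]
      rfl
    have hham : ∀ (Aq : (EuclideanSpace ℝ (Fin n))) (bq : ℝ),
        ∑ i ∈ t, w i * ((inner ℝ Aq (z i) : ℝ) + bq) = (inner ℝ Aq y : ℝ) + bq := by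
      intro Aq bq
      rw [← h1, inner_sum]
      simp_rw [real_inner_smul_right, mul_add]
      rw [Finset.sum_add_distrib, ← Finset.sum_mul, hw1, one_mul]
    have hPsumy : ∑ i ∈ t, w i * P (z i) = P y := by
      calc ∑ i ∈ t, w i * P (z i)
          = ∑ i ∈ t, w i * ((inner ℝ Ap (z i) : ℝ) + bp) :=
            Finset.sum_congr rfl fun i _ => by rw [hP]
        _ = (inner ℝ Ap y : ℝ) + bp := hham Ap bp
        _ = P y := (hP y).symm
    have hPz : ∀ i ∈ t, P (z i) ≤ g (z i) := fun i hi =>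
      le_trans (hPle _ (hfrsubΩ (hzf i hi).2)) (hu_le_g _ (hzf i hi).2)
    have hnn : ∀ i ∈ t, 0 ≤ w i * (g (z i) - P (z i)) := fun i hi =>
      mul_nonneg (hw0 i hi) (by linarith [hPz i hi])
    have hsum0 : ∑ i ∈ t, w i * (g (z i) - P (z i)) = 0 := by
      have hle0 : ∑ i ∈ t, w i * (g (z i) - P (z i)) ≤ 0 := by
        simp_rw [mul_sub]
        rw [Finset.sum_sub_distrib, hPsumy, h2]
        linarith
      exact le_antisymm hle0 (Finset.sum_nonneg hnn)
    have hzero := (Finset.sum_eq_zero_iff_of_nonneg hnn).mp hsum0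
    have hC : ∀ i ∈ t.filter (fun i => w i ≠ 0),
        z i ∈ ({y | y ∈ Ω ∧ u y = P y} ∩ frontier Ω) := by
      intro i hi
      rw [Finset.mem_filter] at hi
      obtain ⟨hit, hwne⟩ := hi
      have hz_fr := (hzf i hit).2
      have hgP : g (z i) = P (z i) := by
        rcases mul_eq_zero.mp (hzero i hit) with h | h
        · exact absurd h hwne
        · linarith
      have hzΩ : z i ∈ Ω := hfrsubΩ hz_fr
      have huz : u (z i) = P (z i) :=
        le_antisymm (le_trans (hu_le_g _ hz_fr) hgP.le) (hPle _ hzΩ)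
      exact ⟨⟨hzΩ, huz⟩, hz_fr⟩
    have hfinal := Finset.centerMass_mem_convexHull (t.filter fun i => w i ≠ 0)
      (fun i hi => hw0 i (Finset.mem_filter.mp hi).1)
      (by rw [Finset.sum_filter_ne_zero, hw1]; norm_num) hC
    rwa [Finset.centerMass_filter_ne_zero, Finset.centerMass_eq_of_sum_1 _ _ hw1, h1]
      at hfinal
  · -- hull ⊆ contact set
    intro x hx
    have hsub : ({y | y ∈ Ω ∧ u y = P y} ∩ frontier Ω) ⊆ Ω := fun z hz => hz.1.1
    have hxΩ : x ∈ Ω := convexHull_min hsub hΩconv hx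
    rw [convexHull_eq] at hx
    obtain ⟨ι, t, w, z, hw0, hw1, hzmem, hcm⟩ := hx
    rw [Finset.centerMass_eq_of_sum_1 _ _ hw1] at hcm
    have hham : ∀ (Aq : (EuclideanSpace ℝ (Fin n))) (bq : ℝ),
        ∑ i ∈ t, w i * ((inner ℝ Aq (z i) : ℝ) + bq) = (inner ℝ Aq x : ℝ) + bq := by
      intro Aq bq
      rw [← hcm, inner_sum]
      simp_rw [real_inner_smul_right, mul_add]
      rw [Finset.sum_add_distrib, ← Finset.sum_mul, hw1, one_mul]
    have hPsumx : ∑ i ∈ t, w i * P (z i) = P x := by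
      calc ∑ i ∈ t, w i * P (z i)
          = ∑ i ∈ t, w i * ((inner ℝ Ap (z i) : ℝ) + bp) :=
            Finset.sum_congr rfl fun i _ => by rw [hP]
        _ = (inner ℝ Ap x : ℝ) + bp := hham Ap bp
        _ = P x := (hP x).symm
    refine ⟨hxΩ, le_antisymm ?_ (hPle x hxΩ)⟩
    rw [hu' x hxΩ]
    refine csSup_le (hSne x) ?_
    rintro r ⟨A, b, hAb, rfl⟩
    calc (inner ℝ A x : ℝ) + b = ∑ i ∈ t, w i * ((inner ℝ A (z i) : ℝ) + b) := (hham A b).symm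
      _ ≤ ∑ i ∈ t, w i * P (z i) := by
          refine Finset.sum_le_sum fun i hi => ?_
          refine mul_le_mul_of_nonneg_left ?_ (hw0 i hi)
          have hziC := hzmem i hi
          have hziΩ : z i ∈ Ω := hziC.1.1
          have : (inner ℝ A (z i) : ℝ) + b ≤ u (z i) := by
            rw [hu' _ hziΩ]
            exact le_csSup (hbdd _ hziΩ) ⟨A, b, hAb, rfl⟩
          rw [hziC.1.2] at this
          exact this
      _ = P x := hPsumx
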